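/- Let (X,d) be a proper metric space (all closed balls compact), f : X → Option (Fin k) with all color classes f⁻¹({some i}) open, and x ∈ X. Define S = {r ∈ ℝ | r > 0 ∧ ∃ i : Fin k, ∀ y ∈ closedBall x r, f y = some i}. Then S is an open subset of ℝ (as a subset of (0,∞) with its subspace topology it is open, and indeed S is downward closed within (0, sup S)). -/
import Mathlib


open Metric Set

/-- The flat (Scott-type) topology on `Option (Fin k)`: a set is open iff
it does not contain `none`, or it is the whole space. -/
def flatTop (k : ℕ) : TopologicalSpace (Option (Fin k)) where
  IsOpen s := none ∈ s → s = Set.univ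
  isOpen_univ := fun _ => rfl
  isOpen_inter := fun s t hs ht h => by
    rw [hs h.1, ht h.2, Set.univ_inter]
  isOpen_sUnion := fun S hS h => by
    obtain ⟨t, htS, hnt⟩ := h
    apply Set.eq_univ_of_univ_subset
    rw [← hS t htS hnt]
    exact Set.subset_sUnion_of_mem htS

theorem stmt_6 {X : Type*} [MetricSpace X] [ProperSpace X] (k : ℕ)
    (f : X → Option (Fin k)) (hf : ∀ i : Fin k, IsOpen (f ⁻¹' {some i})) (x : X) :
    IsOpen {r : ℝ | 0 < r ∧ ∃ i : Fin k, ∀ y ∈ closedBall x r, f y = some i} ∧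
    (∀ r ∈ {r : ℝ | 0 < r ∧ ∃ i : Fin k, ∀ y ∈ closedBall x r, f y = some i},
      ∀ r', 0 < r' → r' ≤ r →
        r' ∈ {r : ℝ | 0 < r ∧ ∃ i : Fin k, ∀ y ∈ closedBall x r, f y = some i}) := by
  set S := {r : ℝ | 0 < r ∧ ∃ i : Fin k, ∀ y ∈ closedBall x r, f y = some i} with hSdef
  have hdown : ∀ r ∈ S, ∀ r', 0 < r' → r' ≤ r → r' ∈ S := by
    rintro r ⟨hr, i, hi⟩ r' hr' hle
    exact ⟨hr', i, fun y hy => hi y (closedBall_subset_closedBall hle hy)⟩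
  refine ⟨?_, hdown⟩
  rw [Metric.isOpen_iff]
  rintro a ⟨ha, i, hi⟩
  have hexists : ∃ a' > a, a' ∈ S := by
    by_cases hK : (closedBall x (a + 1) \ f ⁻¹' {some i}).Nonempty
    · have hKc : IsCompact (closedBall x (a + 1) \ f ⁻¹' {some i}) :=
        (isCompact_closedBall x (a + 1)).diff (hf i)
      obtain ⟨y0, hy0, hmin⟩ :=
        hKc.exists_isMinOn hK (continuous_const.dist continuous_id).continuousOn
      have hy0n : f y0 ≠ some i := fun h => hy0.2 h
      have hd0 : a < dist x y0 := by
        by_contra h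
        push_neg at h
        exact hy0n (hi y0 (mem_closedBall'.mpr h))
      refine ⟨min ((a + dist x y0) / 2) (a + 1), by
        simp only [lt_min_iff]; constructor <;> linarith, ?_, i, fun y hy => ?_⟩
      · have : (0:ℝ) < a + 1 := by linarith
        have : (0:ℝ) < (a + dist x y0) / 2 := by linarith
        simp [lt_min_iff]; constructor <;> linarith
      · by_contra hyn
        have hyK : y ∈ closedBall x (a + 1) \ f ⁻¹' {some i} := by
          refine ⟨closedBall_subset_closedBall (min_le_right _ _) hy, fun h => hyn h⟩
        have h1 : dist x y0 ≤ dist x y := hmin hyK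
        have h2 : dist x y ≤ (a + dist x y0) / 2 :=
          le_trans (mem_closedBall'.mp hy) (min_le_left _ _)
        linarith
    · refine ⟨a + 1, by linarith, by linarith, i, fun y hy => ?_⟩
      by_contra hyn
      exact hK ⟨y, hy, fun h => hyn h⟩
  obtain ⟨a', haa', ha'S⟩ := hexists
  refine ⟨min (a' - a) a, by simp [lt_min_iff]; constructor <;> linarith, fun r hr => ?_⟩
  simp only [mem_ball, Real.dist_eq, lt_min_iff, abs_lt] at hr
  have hr0 : 0 < r := by cases hr with | intro h1 h2 => linarith [h2.1]
  have hrle : r ≤ a' := by cases hr with | intro h1 h2 => linarith [h1.2]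
  exact hdown a' ha'S r hr0 hrle
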